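/- arXiv:1904.02417 — 5 statements merged into one kernel-verified Lean document; each statement's English description precedes it below -/
import Mathlib

section
/- (Atkinson factorization) Let B be an associative unital Rota-Baxter algebra of weight θ with operator R, R̃ = -θ·id - R, and a ∈ B. With F = Σ_n t^n (Ra)^[n] and G = Σ_n t^n (R̃a)^{n} defined by the recursions (Ra)^[0] = 1, (Ra)^[n+1] = R((Ra)^[n]·a), (R̃a)^{0} = 1, (R̃a)^{n+1} = R̃(a·(R̃a)^{n}), one has the factorization F·(1 + aθt)·G = 1 in B[[t]]. -/
/-!
Extend `R` coefficientwise to `B⟦t⟧`: it stays a Rota–Baxter operator of weight `θ` and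
commutes with multiplication by the central element `t`. The recursions become the fixed-point
equations `F = 1 + t R(F a)` and `G = 1 + t R̃(a G)`. The mixed identity
`R(x) R̃(y) = R(x R̃(y)) + R̃(R(x) y)` together with `R + R̃ = -θ` turns
`(F - 1)(G - 1) = t² R(F a) R̃(a G)` into `-θ t F a G - (F - 1) - (G - 1)`, i.e.
`F G = 1 - θ t F a G`, which is the factorization.
-/

def IsRotaBaxter {K A : Type*} [CommSemiring K] [Semiring A] [Module K A] (θ : K)
    (P : A →ₗ[K] A) : Prop :=
  ∀ x y, P x * P y = P (P x * y + x * P y + θ • (x * y))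

namespace IsRotaBaxter

section complement

variable {K A : Type*} [CommSemiring K] [AddCommGroup A] [Module K A]

def complement (θ : K) (P : A →ₗ[K] A) : A →ₗ[K] A := -(θ • LinearMap.id) - P

theorem complement_apply (θ : K) (P : A →ₗ[K] A) (x : A) :
    complement θ P x = -(θ • x) - P x := rfl

theorem add_complement_apply (θ : K) (P : A →ₗ[K] A) (x : A) :
    P x + complement θ P x = -(θ • x) := by
  rw [complement_apply]; abel

end complement

variable {K A : Type*} [CommSemiring K] [Ring A] [Algebra K A] {θ : K} {P : A →ₗ[K] A}

theorem mul_complement (hP : IsRotaBaxter θ P) (x y : A) :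
    P x * complement θ P y = P (x * complement θ P y) + complement θ P (P x * y) := by
  simp only [complement_apply, mul_sub, mul_neg, mul_smul_comm, hP x y, map_sub, map_neg,
    map_smul, map_add]
  abel

theorem atkinson (hP : IsRotaBaxter θ P) {t : A} (ht : ∀ y, Commute t y)
    (hPt : ∀ y, P (t * y) = t * P y) {a F G : A}
    (hF : F = 1 + t * P (F * a)) (hG : G = 1 + t * complement θ P (a * G)) :
    F * (1 + θ • a * t) * G = 1 := by
  have hPt' (y : A) : complement θ P (t * y) = t * complement θ P y := by
    simp only [complement_apply, hPt, mul_sub, mul_neg, mul_smul_comm]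
  have hu : t * P (F * a) = F - 1 := (sub_eq_of_eq_add' hF).symm
  have hv : t * complement θ P (a * G) = G - 1 := (sub_eq_of_eq_add' hG).symm
  have huv : (F - 1) * (G - 1) = -(θ • (t * (F * a * G))) - (F - 1) - (G - 1) := by
    calc (F - 1) * (G - 1)
        = t * (t * (P (F * a) * complement θ P (a * G))) := by
          rw [← hu, ← hv, mul_assoc, ← (ht _).left_comm]
      _ = t * (P (F * a * (t * complement θ P (a * G)))
            + complement θ P (t * P (F * a) * (a * G))) := by
          rw [hP.mul_complement, mul_add, ← hPt, ← hPt', (ht _).left_comm,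
            ← mul_assoc t (P (F * a))]
      _ = t * (P (F * a * G) + complement θ P (F * a * G)) - t * P (F * a)
            - t * complement θ P (a * G) := by
          conv_lhs => rw [hu, hv]
          simp only [mul_sub, sub_mul, mul_one, one_mul, map_sub, mul_add, mul_assoc]
          abel
      _ = -(θ • (t * (F * a * G))) - (F - 1) - (G - 1) := by
          rw [add_complement_apply, hu, hv, mul_neg, mul_smul_comm]
  have hFG : F * G = 1 - θ • (t * (F * a * G)) := by
    calc F * G = (F - 1) * (G - 1) + (F - 1) + (G - 1) + 1 := by noncomm_ring
      _ = 1 - θ • (t * (F * a * G)) := by rw [huv]; abel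
  calc F * (1 + θ • a * t) * G = F * G + θ • (t * (F * a * G)) := by
        simp only [mul_add, add_mul, mul_one, smul_mul_assoc, mul_smul_comm, ← mul_assoc]
        rw [← (ht (F * a)).eq]
        simp only [mul_assoc]
    _ = 1 := by rw [hFG, sub_add_cancel]

end IsRotaBaxter

namespace PowerSeries

variable {K A B : Type*} [CommSemiring K] [Semiring A] [Semiring B] [Module K A] [Module K B]

noncomputable def lmap (f : A →ₗ[K] B) : A⟦X⟧ →ₗ[K] B⟦X⟧ where
  toFun φ := mk fun n => f (coeff n φ)
  map_add' φ ψ := by ext; simp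
  map_smul' c φ := by ext; simp

@[simp]
theorem coeff_lmap (f : A →ₗ[K] B) (n : ℕ) (φ : A⟦X⟧) :
    coeff n (lmap f φ) = f (coeff n φ) := by
  simp [lmap]

theorem lmap_X_mul (f : A →ₗ[K] B) (φ : A⟦X⟧) : lmap f (X * φ) = X * lmap f φ := by
  ext (_ | n) <;> simp [coeff_succ_X_mul]

theorem isRotaBaxter_lmap {θ : K} {P : A →ₗ[K] A} (hP : IsRotaBaxter θ P) :
    IsRotaBaxter θ (lmap P) := by
  intro φ ψ
  ext n
  simp only [coeff_lmap, coeff_mul, map_add, coeff_smul, Finset.smul_sum, map_sum,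
    ← Finset.sum_add_distrib, hP _ _]

end PowerSeries

open PowerSeries IsRotaBaxter

/-- Atkinson factorization: with `F = Σ tⁿ (Ra)^[n]` and
`G = Σ tⁿ (R̃a)^{n}`, one has `F·(1 + aθt)·G = 1` in `B[[t]]`. -/
theorem atkinson_factorization {K B : Type*} [CommRing K] [Ring B] [Algebra K B]
    (θ : K) (R : B →ₗ[K] B)
    (hRB : ∀ x y : B, R x * R y = R (R x * y + x * R y + θ • (x * y)))
    (Rt : B → B) (hRt : ∀ x, Rt x = -(θ • x) - R x)
    (a : B) (c d : ℕ → B)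
    (hc0 : c 0 = 1) (hc : ∀ n, c (n + 1) = R (c n * a))
    (hd0 : d 0 = 1) (hd : ∀ n, d (n + 1) = Rt (a * d n))
    (F G : PowerSeries B) (hF : F = PowerSeries.mk c) (hG : G = PowerSeries.mk d) :
    F * (1 + PowerSeries.C (R := B) (θ • a) * PowerSeries.X) * G = 1 := by
  have hC : C (θ • a) = θ • C a := by
    ext (_ | n) <;> simp [coeff_C]
  rw [hC]
  refine (isRotaBaxter_lmap hRB).atkinson (fun φ => (commute_X φ).symm) (lmap_X_mul R) ?_ ?_
  · ext (_ | n) <;> simp [hF, hc0, hc, coeff_succ_X_mul, coeff_mul_C]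
  · ext (_ | n) <;> simp [hG, hd0, hd, hRt, complement_apply, coeff_succ_X_mul, coeff_C_mul]
end

section
/- Let A = ℝ[x,y] be the polynomial algebra in two variables and define the linear operator R on A by R(x^m y^n) = (m/(m+n))·x^{m+n} when m+n ≠ 0, and R(1) = 1. Then (A, R) is a Rota-Baxter algebra of weight -1: R(P)R(Q) = R(R(P)Q + P·R(Q) - PQ) for all P, Q ∈ A. -/
/-!
Both sides of the Rota–Baxter identity are bilinear in `(P, Q)`, so it suffices to check it on the
monomials `u = xᵃyᵇ`, `v = xᶜyᵈ`. Write `R u = α xᵃ⁺ᵇ` and `R v = γ xᶜ⁺ᵈ`, where `α (a + b) = a`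
and `γ (c + d) = c` (with `α = 1` for `u = 1`). If `N = a + b + c + d > 0`, every term lands in
`x^N`, `R` acts on degree `N` monomials as `xᵖy^q ↦ (p / N) x^N`, and the identity becomes
`α γ N = α c + γ a`, which is `α γ (a + b) + α γ (c + d) = γ a + α c`.
-/

open MvPolynomial

theorem rotaBaxter_of_span_eq_top {K A : Type*} [CommRing K] [Ring A] [Algebra K A]
    (R : A →ₗ[K] A) {S : Set A} (hS : Submodule.span K S = ⊤)
    (h : ∀ p ∈ S, ∀ q ∈ S, R p * R q = R (R p * q + p * R q - p * q)) (P Q : A) :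
    R P * R Q = R (R P * Q + P * R Q - P * Q) := by
  let mul := LinearMap.mul K A
  let defect : A →ₗ[K] A →ₗ[K] A :=
    mul.compl₁₂ R R - (mul.compl₁₂ R .id + mul.compl₁₂ .id R - mul).compr₂ R
  have hdefect : defect = 0 :=
    LinearMap.ext_on hS fun p hp => LinearMap.ext_on hS fun q hq => by
      simp [defect, mul, h p hp q hq]
  simpa [defect, mul, sub_eq_zero] using congr($hdefect P Q)

theorem span_X_zero_pow_mul_X_one_pow_eq_top (K : Type*) [CommSemiring K] :
    Submodule.span K (Set.range fun mn : ℕ × ℕ =>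
      (X 0 ^ mn.1 * X 1 ^ mn.2 : MvPolynomial (Fin 2) K)) = ⊤ := by
  refine eq_top_iff.2 ((basisMonomials (Fin 2) K).span_eq.ge.trans (Submodule.span_mono ?_))
  rintro _ ⟨s, rfl⟩
  exact ⟨(s 0, s 1), by simp [monomial_eq, Finsupp.prod_fintype, Fin.prod_univ_two]⟩

theorem rotaBaxter_coeff_identity {α γ a b c d : ℝ} (hN : a + b + c + d ≠ 0)
    (hα : α * (a + b) = a) (hγ : γ * (c + d) = c) :
    α * γ = α * ((a + b + c) / (a + b + c + d)) + γ * ((a + c + d) / (a + b + c + d))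
      - (a + c) / (a + b + c + d) := by
  field_simp
  linear_combination (γ - 1) * hα + (α - 1) * hγ

section MonomialOperator

variable {R : MvPolynomial (Fin 2) ℝ →ₗ[ℝ] MvPolynomial (Fin 2) ℝ}
  (hmon : ∀ m n : ℕ, m + n ≠ 0 →
    R (X 0 ^ m * X 1 ^ n) = ((m : ℝ) / ((m : ℝ) + n)) • (X 0 ^ (m + n)))
include hmon

theorem apply_X_zero_pow_mul_X_one_pow_of_add_eq {m n N : ℕ} (h : m + n = N) (hN : N ≠ 0) :
    R (X 0 ^ m * X 1 ^ n) = ((m : ℝ) / N) • X 0 ^ N := by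
  subst h
  simpa using hmon m n hN

theorem exists_apply_X_zero_pow_mul_X_one_pow (h1 : R 1 = 1) (m n : ℕ) :
    ∃ α : ℝ, α * (m + n) = m ∧ R (X 0 ^ m * X 1 ^ n) = α • X 0 ^ (m + n) := by
  by_cases hmn : m + n = 0
  · obtain ⟨rfl, rfl⟩ := Nat.add_eq_zero_iff.1 hmn
    exact ⟨1, by simp, by simp [h1]⟩
  · exact ⟨m / (m + n), div_mul_cancel₀ _ (by exact_mod_cast hmn), hmon m n hmn⟩

theorem rotaBaxter_X_zero_pow_mul_X_one_pow (h1 : R 1 = 1) (a b c d : ℕ) :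
    R (X 0 ^ a * X 1 ^ b) * R (X 0 ^ c * X 1 ^ d) =
      R (R (X 0 ^ a * X 1 ^ b) * (X 0 ^ c * X 1 ^ d) + X 0 ^ a * X 1 ^ b * R (X 0 ^ c * X 1 ^ d)
        - X 0 ^ a * X 1 ^ b * (X 0 ^ c * X 1 ^ d)) := by
  by_cases hN : a + b + c + d = 0
  · obtain ⟨rfl, rfl, rfl, rfl⟩ : a = 0 ∧ b = 0 ∧ c = 0 ∧ d = 0 := by omega
    simp [h1]
  obtain ⟨α, hα, hRu⟩ := exists_apply_X_zero_pow_mul_X_one_pow hmon h1 a b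
  obtain ⟨γ, hγ, hRv⟩ := exists_apply_X_zero_pow_mul_X_one_pow hmon h1 c d
  have hRsum : R (α • (X 0 ^ (a + b + c) * X 1 ^ d) + γ • (X 0 ^ (a + c + d) * X 1 ^ b)
      - X 0 ^ (a + c) * X 1 ^ (b + d)) =
        (α * ((a + b + c) / (a + b + c + d)) + γ * ((a + c + d) / (a + b + c + d))
          - (a + c) / (a + b + c + d) : ℝ) • X 0 ^ (a + b + c + d) := by
    rw [map_sub, map_add, map_smul, map_smul,
      apply_X_zero_pow_mul_X_one_pow_of_add_eq hmon rfl hN,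
      apply_X_zero_pow_mul_X_one_pow_of_add_eq hmon (by omega) hN,
      apply_X_zero_pow_mul_X_one_pow_of_add_eq hmon (by omega) hN]
    push_cast
    module
  calc R (X 0 ^ a * X 1 ^ b) * R (X 0 ^ c * X 1 ^ d)
      _ = (α * γ) • X 0 ^ (a + b + c + d) := by
        rw [hRu, hRv, smul_mul_smul_comm, ← pow_add, ← add_assoc]
      _ = _ := by rw [rotaBaxter_coeff_identity (by exact_mod_cast hN) hα hγ, ← hRsum]
      _ = _ := by
        rw [hRu, hRv]
        congr 1
        simp only [smul_eq_C_mul]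
        ring

end MonomialOperator

/-- On `A = ℝ[x,y]`, the linear operator defined on monomials by
`R(xᵐyⁿ) = (m/(m+n))·x^{m+n}` (and `R(1) = 1`) is a Rota-Baxter operator of
weight `-1`. -/
theorem organic_rota_baxter
    (R : MvPolynomial (Fin 2) ℝ →ₗ[ℝ] MvPolynomial (Fin 2) ℝ)
    (h1 : R 1 = 1)
    (hmon : ∀ m n : ℕ, m + n ≠ 0 →
      R (X 0 ^ m * X 1 ^ n) = ((m : ℝ) / ((m : ℝ) + n)) • (X 0 ^ (m + n))) :
    ∀ P Q : MvPolynomial (Fin 2) ℝ,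
      R P * R Q = R (R P * Q + P * R Q - P * Q) :=
  rotaBaxter_of_span_eq_top R (span_X_zero_pow_mul_X_one_pow_eq_top ℝ) <| by
    rintro _ ⟨⟨a, b⟩, rfl⟩ _ ⟨⟨c, d⟩, rfl⟩
    exact rotaBaxter_X_zero_pow_mul_X_one_pow hmon h1 a b c d
end

section
/- Let Ω = ℕ* and define the character ι on the quasi-shuffle Hopf algebra Hqsh over Ω by ι(w) = 1 if the word w has length at most 1, and ι(w) = 0 otherwise. Then ι is multiplicative with respect to the quasi-shuffle product: ι(u ⧢- v) = ι(u)·ι(v) for all words u, v, where ⧢- denotes the quasi-shuffle product with letter addition ω_i + ω_j = ω_{i+j}. -/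
/-- The quasi-shuffle product of two words over the alphabet `ℕ+` (with the
semigroup law of addition of letters), with values in formal `ℕ`-linear
combinations of words:
`am ⧢- bn = a(m ⧢- bn) + b(am ⧢- n) + (a+b)(m ⧢- n)`. -/
noncomputable def qsh : List ℕ+ → List ℕ+ → (List ℕ+ →₀ ℕ)
  | [], w => Finsupp.single w 1
  | a :: m, [] => Finsupp.single (a :: m) 1
  | a :: m, b :: n =>
      (qsh m (b :: n)).mapDomain (a :: ·) + (qsh (a :: m) n).mapDomain (b :: ·)
        + (qsh m n).mapDomain ((a + b) :: ·)
  termination_by u v => u.length + v.length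

/-- The mould `ι`: value `1` on words of length `≤ 1`, `0` otherwise. -/
noncomputable def iotaWord (w : List ℕ+) : ℝ := if w.length ≤ 1 then 1 else 0

/-- The linear extension of `ι` to formal linear combinations of words. -/
noncomputable def iotaLift (f : List ℕ+ →₀ ℕ) : ℝ :=
  f.sum fun w c => (c : ℝ) * iotaWord w

lemma iotaLift_add (f g : List ℕ+ →₀ ℕ) : iotaLift (f + g) = iotaLift f + iotaLift g := by
  unfold iotaLift
  apply Finsupp.sum_add_index <;> intros <;> push_cast <;> ring

lemma iotaLift_single (w : List ℕ+) : iotaLift (Finsupp.single w 1) = iotaWord w := by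
  unfold iotaLift
  rw [Finsupp.sum_single_index] <;> simp

lemma iotaWord_cons (a : ℕ+) (w : List ℕ+) :
    iotaWord (a :: w) = if w = [] then 1 else 0 := by
  unfold iotaWord
  cases w <;> simp

lemma iotaLift_mapDomain_cons (a : ℕ+) (f : List ℕ+ →₀ ℕ) :
    iotaLift (f.mapDomain (a :: ·)) = (f [] : ℝ) := by
  unfold iotaLift
  rw [Finsupp.sum_mapDomain_index (by simp) (by intros; push_cast; ring)]
  have : (f.sum fun w c => (c : ℝ) * iotaWord (a :: w))
      = f.sum fun w c => if w = [] then (c : ℝ) else 0 := by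
    apply Finsupp.sum_congr
    intro w _
    rw [iotaWord_cons]
    split <;> simp
  rw [this, Finsupp.sum_ite_eq' f [] (fun _ c => (c : ℝ))]
  split <;> simp_all

lemma qsh_apply_nil (u v : List ℕ+) :
    qsh u v [] = if u = [] ∧ v = [] then 1 else 0 := by
  have hnot : ∀ (a : ℕ+) (f : List ℕ+ →₀ ℕ),
      (f.mapDomain (a :: ·)) [] = 0 := by
    intro a f
    apply Finsupp.mapDomain_notin_range
    rintro ⟨w, hw⟩
    simp at hw
  match u, v with
  | [], [] => simp [qsh]
  | [], b :: n => simp [qsh, Finsupp.single_apply]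
  | a :: m, [] => simp [qsh, Finsupp.single_apply]
  | a :: m, b :: n => simp [qsh, hnot]

/-- `ι` is multiplicative for the quasi-shuffle product:
`ι(u ⧢- v) = ι(u)·ι(v)` for all words `u, v`. -/
theorem iota_quasi_shuffle_character (u v : List ℕ+) :
    iotaLift (qsh u v) = iotaWord u * iotaWord v := by
  match u, v with
  | [], w =>
    rw [show qsh [] w = Finsupp.single w 1 from by rw [qsh], iotaLift_single]
    simp [iotaWord]
  | a :: m, [] =>
    rw [show qsh (a :: m) [] = Finsupp.single (a :: m) 1 from by rw [qsh], iotaLift_single]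
    simp [iotaWord]
  | a :: m, b :: n =>
    rw [show qsh (a :: m) (b :: n) =
      (qsh m (b :: n)).mapDomain (a :: ·) + (qsh (a :: m) n).mapDomain (b :: ·)
        + (qsh m n).mapDomain ((a + b) :: ·) from by rw [qsh]]
    rw [iotaLift_add, iotaLift_add, iotaLift_mapDomain_cons, iotaLift_mapDomain_cons,
      iotaLift_mapDomain_cons, qsh_apply_nil, qsh_apply_nil, qsh_apply_nil,
      iotaWord_cons, iotaWord_cons]
    rcases m with _ | _ <;> rcases n with _ | _ <;> simp
end

section
/- Let Hsh be the shuffle algebra on words over {1,2} and define R : Hsh → Hsh on words by R(w) = w if the first letter of w is 1 and R(w) = 0 otherwise (R(∅) can be set to ∅, or 0, consistently with the decomposition), extended linearly. Then R is an idempotent operator and (Hsh, R) is a unital commutative Rota-Baxter algebra of weight -1: R(u)⧢R(v) = R(R(u)⧢v + u⧢R(v) - u⧢v) for all u, v ∈ Hsh. -/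
/-- The shuffle product of two words over `{1,2} ⊆ ℕ`, with values in formal
`ℤ`-linear combinations of words: `am ⧢ bn = a(m ⧢ bn) + b(am ⧢ n)`. -/
noncomputable def sh : List ℕ → List ℕ → (List ℕ →₀ ℤ)
  | [], w => Finsupp.single w 1
  | a :: m, [] => Finsupp.single (a :: m) 1
  | a :: m, b :: n =>
      (sh m (b :: n)).mapDomain (a :: ·) + (sh (a :: m) n).mapDomain (b :: ·)
  termination_by u v => u.length + v.length

/-- Bilinear extension of the shuffle product to `Hsh`, the span of words. -/
noncomputable def shMul (f g : List ℕ →₀ ℤ) : List ℕ →₀ ℤ :=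
  f.sum fun u cu => g.sum fun v cv => (cu * cv) • sh u v

/-- The linear projection onto the span of words whose first letter is `1`
(words not starting with `1`, including the empty word, are sent to `0`). -/
noncomputable def RF (f : List ℕ →₀ ℤ) : List ℕ →₀ ℤ :=
  f.filter fun w => w.head? = some 1

/-!
Every word occurring in `u ⧢ v` begins with the first letter of `u` or of `v`. Hence the span of
words beginning with `1` and the span of the other words are both closed under `⧢`, and the
projection `R` onto the first along the second is Rota–Baxter of weight `-1`, by the identity
`R u ⧢ v + u ⧢ R v - u ⧢ v = R u ⧢ R v - (u - R u) ⧢ (v - R v)`.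
-/

theorem sh_comm : ∀ u v : List ℕ, sh u v = sh v u
  | [], [] => rfl
  | [], _ :: _ => by rw [sh, sh]
  | _ :: _, [] => by rw [sh, sh]
  | a :: m, b :: n => by
      rw [sh, sh, sh_comm m (b :: n), sh_comm (a :: m) n, add_comm]
  termination_by u v => u.length + v.length

theorem head?_of_mem_support_sh {u v w : List ℕ} (hw : w ∈ (sh u v).support) :
    w.head? = u.head? ∨ w.head? = v.head? := by
  match u, v with
  | [], v => rw [sh, Finsupp.mem_support_single] at hw; exact .inr (congrArg _ hw.1)
  | a :: m, [] => rw [sh, Finsupp.mem_support_single] at hw; exact .inl (congrArg _ hw.1)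
  | a :: m, b :: n =>
    rw [sh] at hw
    rcases Finset.mem_union.1 (Finsupp.support_add hw) with hw | hw <;>
      obtain ⟨x, -, rfl⟩ := Finset.mem_image.1 (Finsupp.mapDomain_support hw)
    exacts [.inl rfl, .inr rfl]

theorem shMul_add_left (f f' g : List ℕ →₀ ℤ) :
    shMul (f + f') g = shMul f g + shMul f' g :=
  Finsupp.sum_add_index' (fun _ => by simp) fun _ _ _ => by
    simp only [add_mul, add_smul, Finsupp.sum_add]

theorem shMul_add_right (f g g' : List ℕ →₀ ℤ) :
    shMul f (g + g') = shMul f g + shMul f g' := by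
  simp only [shMul, ← Finsupp.sum_add]
  refine Finsupp.sum_congr fun _ _ => Finsupp.sum_add_index' (fun _ => by simp) fun _ _ _ => ?_
  simp only [mul_add, add_smul]

theorem shMul_comm (f g : List ℕ →₀ ℤ) : shMul f g = shMul g f := by
  rw [shMul, shMul, Finsupp.sum_comm]
  exact Finsupp.sum_congr fun v _ => Finsupp.sum_congr fun u _ => by rw [sh_comm, mul_comm]

theorem shMul_empty_left (f : List ℕ →₀ ℤ) : shMul (Finsupp.single [] 1) f = f := by
  rw [shMul, Finsupp.sum_single_index (by simp)]
  conv_rhs => rw [← Finsupp.sum_single f]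
  exact Finsupp.sum_congr fun v _ => by rw [sh, one_mul, Finsupp.smul_single_one]

theorem head?_of_mem_support_shMul (p : Option ℕ → Prop) {f g : List ℕ →₀ ℤ}
    (hf : ∀ u ∈ f.support, p u.head?) (hg : ∀ v ∈ g.support, p v.head?) :
    ∀ w ∈ (shMul f g).support, p w.head? := by
  intro w hw
  obtain ⟨u, hu, hw⟩ := Finset.mem_biUnion.1 (Finsupp.support_sum hw)
  obtain ⟨v, hv, hw⟩ := Finset.mem_biUnion.1 (Finsupp.support_sum hw)
  rcases head?_of_mem_support_sh (Finsupp.support_smul hw) with h | h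
  · exact h ▸ hf u hu
  · exact h ▸ hg v hv

theorem AddMonoidHom.rotaBaxter_of_complementary_subalgebras {M : Type*} [AddCommGroup M]
    (μ : M →+ M →+ M) (P : M →+ M) (hP : ∀ x y, P (μ (P x) (P y)) = μ (P x) (P y))
    (hQ : ∀ x y, P (μ (x - P x) (y - P y)) = 0) (x y : M) :
    μ (P x) (P y) = P (μ (P x) y + μ x (P y) - μ x y) := by
  have expand : μ (P x) y + μ x (P y) - μ x y = μ (P x) (P y) - μ (x - P x) (y - P y) := by
    simp only [map_sub, AddMonoidHom.sub_apply]
    abel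
  rw [expand, map_sub, hP, hQ, sub_zero]

noncomputable def shMulAddHom : (List ℕ →₀ ℤ) →+ (List ℕ →₀ ℤ) →+ (List ℕ →₀ ℤ) :=
  AddMonoidHom.mk' (fun f => AddMonoidHom.mk' (shMul f) (shMul_add_right f)) fun f f' =>
    AddMonoidHom.ext (shMul_add_left f f')

theorem head?_of_mem_support_RF {f : List ℕ →₀ ℤ} {w : List ℕ} (hw : w ∈ (RF f).support) :
    w.head? = some 1 := by
  rw [RF, Finsupp.support_filter] at hw
  exact (Finset.mem_filter.1 hw).2

theorem head?_of_mem_support_sub_RF {f : List ℕ →₀ ℤ} {w : List ℕ}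
    (hw : w ∈ (f - RF f).support) : w.head? ≠ some 1 := by
  have h : f - RF f = f.filter fun w => ¬ w.head? = some 1 := by
    rw [sub_eq_iff_eq_add', RF, Finsupp.filter_add_filter_not]
  rw [h, Finsupp.support_filter] at hw
  exact (Finset.mem_filter.1 hw).2

theorem RF_eq_self {f : List ℕ →₀ ℤ} (hf : ∀ w ∈ f.support, w.head? = some 1) : RF f = f :=
  (Finsupp.filter_eq_self_iff _ f).2 fun w hw => hf w (Finsupp.mem_support_iff.2 hw)

theorem RF_eq_zero {f : List ℕ →₀ ℤ} (hf : ∀ w ∈ f.support, w.head? ≠ some 1) : RF f = 0 :=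
  (Finsupp.filter_eq_zero_iff _ f).2 fun w hw =>
    by_contra fun h => hf w (Finsupp.mem_support_iff.2 h) hw

theorem RF_RF (f : List ℕ →₀ ℤ) : RF (RF f) = RF f :=
  RF_eq_self fun _ => head?_of_mem_support_RF

theorem RF_shMul_RF_RF (f g : List ℕ →₀ ℤ) :
    RF (shMul (RF f) (RF g)) = shMul (RF f) (RF g) :=
  RF_eq_self <| head?_of_mem_support_shMul (· = some 1)
    (fun _ => head?_of_mem_support_RF) fun _ => head?_of_mem_support_RF

theorem RF_shMul_sub_RF (f g : List ℕ →₀ ℤ) : RF (shMul (f - RF f) (g - RF g)) = 0 :=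
  RF_eq_zero <| head?_of_mem_support_shMul (· ≠ some 1)
    (fun _ => head?_of_mem_support_sub_RF) fun _ => head?_of_mem_support_sub_RF

/-- `R` is idempotent and `(Hsh, R)` is a unital commutative
Rota-Baxter algebra of weight `-1`:
`R(u)⧢R(v) = R(R(u)⧢v + u⧢R(v) - u⧢v)`. -/
theorem shuffle_RF_rota_baxter :
    (∀ f, RF (RF f) = RF f) ∧
    (∀ f g, shMul f g = shMul g f) ∧
    (∀ f, shMul (Finsupp.single [] 1) f = f) ∧
    (∀ f g : List ℕ →₀ ℤ,
      shMul (RF f) (RF g) = RF (shMul (RF f) g + shMul f (RF g) - shMul f g)) :=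
  ⟨RF_RF, shMul_comm, shMul_empty_left,
    AddMonoidHom.rotaBaxter_of_complementary_subalgebras shMulAddHom (Finsupp.filterAddHom _)
      RF_shMul_RF_RF RF_shMul_sub_RF⟩
end

section
/- For positive integers l and ω₁, one has the identity Σ_{k=0}^{ω₁} C(ω₁,k) · [(lk)!/(l!)^k] · [(l(ω₁-k))!/(l!)^{ω₁-k}] · [(lω₁-1)!/((lk-1)!·(l(ω₁-k))!)] = 2^{ω₁-1}·(lω₁)!/(l!)^{ω₁}, where the term with k=0 is interpreted as 0 (since (lk-1)! is undefined / the count of shuffles beginning with letter 1 is 0 when the first factor is empty). -/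
open Finset Nat

theorem Nat.sum_Icc_mul_choose (n : ℕ) :
    ∑ k ∈ Icc 1 n, k * n.choose k = n * 2 ^ (n - 1) := by
  rw [← sum_range_mul_choose, range_eq_Ico, sum_eq_sum_Ico_succ_bot (succ_pos n)]
  simp [Ico_add_one_right_eq_Icc]

/-- Cancelling `(l k)! / (l k - 1)! = l k` and collecting the powers of `l!`, each summand
is `k C(n, k)` times a factor independent of `k`. -/
lemma shuffle_summand_eq {l n k : ℕ} (hl : 0 < l) (hk : 0 < k) (hkn : k ≤ n) :
    (n.choose k : ℝ) * ((l * k)! / (l ! : ℝ) ^ k)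
        * ((l * (n - k))! / (l ! : ℝ) ^ (n - k))
        * ((l * n - 1)! / (((l * k - 1)! : ℝ) * (l * (n - k))!))
      = (k * n.choose k : ℕ) * (l * (l * n - 1)! / (l ! : ℝ) ^ n) := by
  have hfact : ((l * k)! : ℝ) = (l * k : ℕ) * (l * k - 1)! := by
    rw [← mul_factorial_pred (Nat.mul_pos hl hk).ne', cast_mul]
  have hpow : (l ! : ℝ) ^ n = (l ! : ℝ) ^ k * (l ! : ℝ) ^ (n - k) := by
    rw [← pow_add, Nat.add_sub_cancel' hkn]
  rw [hfact, hpow]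
  field_simp
  push_cast
  ring

/-- For positive integers `l` and `ω₁`,
`Σ_{k=1}^{ω₁} C(ω₁,k)·(lk)!/(l!)^k·(l(ω₁-k))!/(l!)^{ω₁-k}·(lω₁-1)!/((lk-1)!(l(ω₁-k))!)
  = 2^{ω₁-1}·(lω₁)!/(l!)^{ω₁}`
(the summand for `k = 0` being `0` by convention, so the sum starts at `k = 1`). -/
theorem shuffle_counting_identity (l ω₁ : ℕ) (hl : 0 < l) (hω : 0 < ω₁) :
    ∑ k ∈ Finset.Icc 1 ω₁,
      (Nat.choose ω₁ k : ℝ)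
        * ((Nat.factorial (l * k) : ℝ) / (Nat.factorial l : ℝ) ^ k)
        * ((Nat.factorial (l * (ω₁ - k)) : ℝ) / (Nat.factorial l : ℝ) ^ (ω₁ - k))
        * ((Nat.factorial (l * ω₁ - 1) : ℝ)
            / ((Nat.factorial (l * k - 1) : ℝ) * (Nat.factorial (l * (ω₁ - k)) : ℝ)))
      = 2 ^ (ω₁ - 1) * (Nat.factorial (l * ω₁) : ℝ) / (Nat.factorial l : ℝ) ^ ω₁ := by
  have hfact : ((l * ω₁)! : ℝ) = (l * ω₁ : ℕ) * (l * ω₁ - 1)! := by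
    rw [← mul_factorial_pred (Nat.mul_pos hl hω).ne', cast_mul]
  calc _ = ∑ k ∈ Icc 1 ω₁,
          ((k * ω₁.choose k : ℕ) : ℝ) * (l * (l * ω₁ - 1)! / (l ! : ℝ) ^ ω₁) :=
        sum_congr rfl fun k hk => by
          obtain ⟨hk, hkω⟩ := mem_Icc.mp hk
          exact shuffle_summand_eq hl hk hkω
    _ = (ω₁ * 2 ^ (ω₁ - 1) : ℕ) * (l * (l * ω₁ - 1)! / (l ! : ℝ) ^ ω₁) := by
        rw [← sum_mul, ← cast_sum, sum_Icc_mul_choose]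
    _ = _ := by
        rw [hfact]
        push_cast
        ring
end
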